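/- Let E be a real inner product space, let u, u₁, …, uₙ be elements of E with ⟪u, u⟫ = 1 and ‖uᵢ‖ ≤ 1 for every i, and let σ > 0. Let K be the n×n real matrix with entries K i j = ⟪uᵢ, uⱼ⟫ and let κ ∈ ℝⁿ have entries κ i = ⟪uᵢ, u⟫. Then 1 − κᵀ (K + σ²·I)⁻¹ κ ≥ σ²/(n + σ²). -/

import Mathlib

open Matrix
open scoped RealInnerProductSpace

/-! With `A = K + σ²I`, `x = A⁻¹κ` and `w = ∑ xᵢ uᵢ`, the equation `A x = κ` turns
`1 - κᵀx` into `‖u - w‖² + σ²‖x‖²`, the optimal value of the ridge regression of `u` on the `uᵢ`.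
Since `‖uᵢ‖ ≤ 1`, Cauchy–Schwarz gives `‖w‖² ≤ n‖x‖²`, while `‖u - w‖ ≥ |1 - ‖w‖|`; minimizing
`(1 - t)² + σ²t²/n` over `t` leaves `σ²/(n + σ²)`. -/

section
variable {ι E : Type*} [Fintype ι] [NormedAddCommGroup E] [InnerProductSpace ℝ E]

lemma dotProduct_gram_mulVec_self (v : ι → E) (x : ι → ℝ) :
    x ⬝ᵥ (gram ℝ v *ᵥ x) = ‖∑ i, x i • v i‖ ^ 2 := by
  simpa [real_inner_self_eq_norm_sq] using star_dotProduct_gram_mulVec (𝕜 := ℝ) v x x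

lemma posDef_gram_add_smul_one [DecidableEq ι] (v : ι → E) {c : ℝ} (hc : 0 < c) :
    (gram ℝ v + c • (1 : Matrix ι ι ℝ)).PosDef :=
  PosDef.posSemidef_add (posSemidef_gram ℝ v) (PosDef.one.smul hc)

lemma inner_self_sub_dotProduct_eq [DecidableEq ι] (u : E) (v : ι → E) (c : ℝ) {x : ι → ℝ}
    (hx : (gram ℝ v + c • (1 : Matrix ι ι ℝ)) *ᵥ x = fun i ↦ ⟪v i, u⟫) :
    ⟪u, u⟫ - (fun i ↦ ⟪v i, u⟫) ⬝ᵥ x = ‖u - ∑ i, x i • v i‖ ^ 2 + c * (x ⬝ᵥ x) := by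
  have h_inner : (fun i ↦ ⟪v i, u⟫) ⬝ᵥ x = ⟪u, ∑ i, x i • v i⟫ := by
    simp only [dotProduct, inner_sum, real_inner_smul_right, real_inner_comm u, mul_comm]
  have h_quad : (fun i ↦ ⟪v i, u⟫) ⬝ᵥ x = ‖∑ i, x i • v i‖ ^ 2 + c * (x ⬝ᵥ x) := by
    rw [← hx, dotProduct_comm, add_mulVec, dotProduct_add, dotProduct_gram_mulVec_self,
      smul_mulVec, one_mulVec, dotProduct_smul, smul_eq_mul]
  rw [norm_sub_sq_real, ← h_inner, real_inner_self_eq_norm_sq]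
  linarith

lemma norm_sum_smul_sq_le (v : ι → E) (hv : ∀ i, ‖v i‖ ≤ 1) (x : ι → ℝ) :
    ‖∑ i, x i • v i‖ ^ 2 ≤ Fintype.card ι * (x ⬝ᵥ x) := by
  have h_triangle : ‖∑ i, x i • v i‖ ≤ ∑ i, |x i| :=
    (norm_sum_le _ _).trans <| Finset.sum_le_sum fun i _ ↦ by
      simpa [norm_smul] using mul_le_of_le_one_right (abs_nonneg (x i)) (hv i)
  calc ‖∑ i, x i • v i‖ ^ 2 ≤ (∑ i, |x i|) ^ 2 := by gcongr
    _ ≤ Fintype.card ι * ∑ i, |x i| ^ 2 := by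
      simpa using sq_sum_le_card_mul_sum_sq (s := Finset.univ) (f := fun i ↦ |x i|)
    _ = Fintype.card ι * (x ⬝ᵥ x) := by simp [dotProduct, sq]

end

lemma div_add_le_one_sub_sq_add_mul {N c t S : ℝ} (hN : 0 ≤ N) (hc : 0 < c) (hS : 0 ≤ S)
    (htS : t ^ 2 ≤ N * S) : c / (N + c) ≤ (1 - t) ^ 2 + c * S := by
  rw [div_le_iff₀ (by positivity)]
  rcases hN.eq_or_lt with rfl | hN
  · obtain rfl : t = 0 := pow_eq_zero_iff two_ne_zero |>.mp (by nlinarith [sq_nonneg t])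
    nlinarith [mul_nonneg (mul_nonneg hc.le hc.le) hS]
  · -- `(N + c) * (N * (1 - t) ^ 2 + c * t ^ 2) - N * c = ((N + c) * t - N) ^ 2`
    refine le_of_mul_le_mul_left ?_ hN
    nlinarith [sq_nonneg ((N + c) * t - N),
      mul_le_mul_of_nonneg_left htS (by positivity : 0 ≤ c * (N + c))]

theorem stmt_7 {E : Type*} [NormedAddCommGroup E] [InnerProductSpace ℝ E]
    {n : ℕ} (u : E) (u' : Fin n → E) (hu : ⟪u, u⟫ = 1)
    (hu' : ∀ i, ‖u' i‖ ≤ 1) (σ : ℝ) (hσ : 0 < σ)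
    (K : Matrix (Fin n) (Fin n) ℝ) (hK : ∀ i j, K i j = ⟪u' i, u' j⟫)
    (κ : Fin n → ℝ) (hκ : ∀ i, κ i = ⟪u' i, u⟫) :
    σ ^ 2 / (n + σ ^ 2) ≤
      1 - κ ⬝ᵥ ((K + σ ^ 2 • (1 : Matrix (Fin n) (Fin n) ℝ))⁻¹ *ᵥ κ) := by
  obtain rfl : K = gram ℝ u' := Matrix.ext hK
  obtain rfl : κ = fun i ↦ ⟪u' i, u⟫ := funext hκ
  set A := gram ℝ u' + σ ^ 2 • (1 : Matrix (Fin n) (Fin n) ℝ)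
  set x := A⁻¹ *ᵥ fun i ↦ ⟪u' i, u⟫
  set w := ∑ i, x i • u' i
  have hA : A.PosDef := posDef_gram_add_smul_one u' (pow_pos hσ 2)
  have hAx : A *ᵥ x = fun i ↦ ⟪u' i, u⟫ := by
    rw [mulVec_mulVec, mul_nonsing_inv _ ((isUnit_iff_isUnit_det _).mp hA.isUnit), one_mulVec]
  have hu_norm : ‖u‖ = 1 := by
    rw [norm_eq_sqrt_real_inner, hu, Real.sqrt_one]
  have h_dist : (1 - ‖w‖) ^ 2 ≤ ‖u - w‖ ^ 2 :=
    sq_le_sq.mpr <| hu_norm ▸ (abs_norm_sub_norm_le u w).trans (le_abs_self _)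
  rw [← hu, inner_self_sub_dotProduct_eq u u' _ hAx]
  calc σ ^ 2 / (n + σ ^ 2) ≤ (1 - ‖w‖) ^ 2 + σ ^ 2 * (x ⬝ᵥ x) :=
        div_add_le_one_sub_sq_add_mul n.cast_nonneg (pow_pos hσ 2) (dotProduct_star_self_nonneg x)
          (by simpa using norm_sum_smul_sq_le u' hu' x)
    _ ≤ ‖u - w‖ ^ 2 + σ ^ 2 * (x ⬝ᵥ x) := by gcongr
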